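/- Let q, d ≥ 2 be integers with d dividing q, and let x be an integer. Then the density δ(q, d; 1, 0, 0, 0, x) exists and equals (1/d²)·Σ_{f ∣ gcd(x,d)} f·φ(d/f), where the sum runs over the positive divisors f of gcd(x, d) and φ is Euler's totient function. That is, lim_{N→∞} (1/N)·|{n < N : u_q(n) + x ≡ 0 (mod d)}| = (1/d²)·Σ_{f ∣ gcd(x,d)} f·φ(d/f). -/

import Mathlib

open Filter

/-- `vq q n` is the `q`-adic valuation: `0` if `n = 0`, and otherwise the
largest `k` such that `q ^ k` divides `n`. -/
noncomputable def vq (q n : ℕ) : ℕ := if n = 0 then 0 else sSup {k : ℕ | q ^ k ∣ n}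

/-- `wq q n = ∑_{i=0}^n vq q i`. -/
noncomputable def wq (q n : ℕ) : ℕ := ∑ i ∈ Finset.range (n + 1), vq q i

/-- `uq q n = ∑_{i=0}^n wq q i`. -/
noncomputable def uq (q n : ℕ) : ℕ := ∑ i ∈ Finset.range (n + 1), wq q i

/-!
Since `d ∣ q`, one has `u(n) ≡ (n + 1) w(n) (mod d)`, and `w(q m + r) = m + w(m)` for `r < q`.
Writing `n = q² m + q c₁ + c₀` with digits `c₀, c₁ < q`, this gives
`u(n) ≡ (c₁ + m + w(m)) (c₀ + 1) (mod d)`, so every block of `q²` consecutive integers contains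
exactly `(q/d)²` times as many solutions as there are pairs `(a, b)` in `(ℤ/d)²` with
`a b + x = 0`. For fixed `a` with `gcd(a, d) = f` the map `b ↦ a b` has kernel of size `f` and
image `fℤ/dℤ`, so there are `f` solutions `b` if `f ∣ x` and none otherwise; exactly `φ(d/f)`
residues `a` have `gcd(a, d) = f`.
-/

open Finset Topology

section Valuation

variable {q : ℕ}

theorem vq_eq_of_dvd_of_not_dvd {n a : ℕ} (h : q ^ a ∣ n) (h' : ¬q ^ (a + 1) ∣ n) :
    vq q n = a := by
  have hn : n ≠ 0 := by rintro rfl; exact h' (dvd_zero _)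
  have hub : a ∈ upperBounds {k : ℕ | q ^ k ∣ n} := fun k hk =>
    not_lt.1 fun hak => h' ((pow_dvd_pow q hak).trans hk)
  rw [vq, if_neg hn]
  exact le_antisymm (csSup_le ⟨a, h⟩ hub) (le_csSup ⟨a, hub⟩ h)

theorem vq_of_not_dvd {n : ℕ} (h : ¬q ∣ n) : vq q n = 0 :=
  vq_eq_of_dvd_of_not_dvd (by simp) (by simpa using h)

theorem vq_pow_mul (hq : q ≠ 0) (e : ℕ) {m : ℕ} (hm : ¬q ∣ m) : vq q (q ^ e * m) = e := by
  refine vq_eq_of_dvd_of_not_dvd (dvd_mul_right _ _) fun h => hm ?_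
  rwa [pow_succ, mul_dvd_mul_iff_left (pow_ne_zero e hq)] at h

theorem vq_self_mul (hq : 2 ≤ q) {k : ℕ} (hk : k ≠ 0) : vq q (q * k) = vq q k + 1 := by
  obtain ⟨e, m, hm, rfl⟩ := Nat.exists_eq_pow_mul_and_not_dvd hk q (by omega)
  rw [← mul_assoc, ← pow_succ', vq_pow_mul (by omega) _ hm, vq_pow_mul (by omega) _ hm]

theorem wq_succ (q n : ℕ) : wq q (n + 1) = wq q n + vq q (n + 1) :=
  sum_range_succ _ _

theorem wq_self_mul_add (m : ℕ) {r : ℕ} (hr : r < q) : wq q (q * m + r) = wq q (q * m) := by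
  induction r with
  | zero => rfl
  | succ r ih =>
    rw [← add_assoc, wq_succ, ih (by omega), add_assoc,
      vq_of_not_dvd fun h => Nat.not_dvd_of_pos_of_lt r.succ_pos hr
        ((Nat.dvd_add_right (dvd_mul_right q m)).1 h), add_zero]

theorem wq_self_mul (hq : 2 ≤ q) (m : ℕ) : wq q (q * m) = m + wq q m := by
  induction m with
  | zero => simp [wq, vq]
  | succ m ih =>
    have hsplit : q * (m + 1) = q * m + (q - 1) + 1 := by
      rw [mul_add_one]; omega
    rw [hsplit, wq_succ, wq_self_mul_add m (by omega), ih, ← hsplit, vq_self_mul hq m.succ_ne_zero,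
      wq_succ]
    ring

end Valuation

theorem uq_succ (q n : ℕ) : uq q (n + 1) = uq q n + wq q (n + 1) :=
  sum_range_succ _ _

theorem uq_natCast_zmod {q d : ℕ} (hdq : d ∣ q) (n : ℕ) :
    (uq q n : ZMod d) = (n + 1) * wq q n := by
  induction n with
  | zero => simp [uq, wq, vq]
  | succ n ih =>
    rw [uq_succ, Nat.cast_add, ih]
    by_cases h : q ∣ n + 1
    · have h0 : ((n + 1 : ℕ) : ZMod d) = 0 := (ZMod.natCast_eq_zero_iff _ _).2 (hdq.trans h)
      push_cast at h0 ⊢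
      rw [h0]
      ring
    · rw [wq_succ, vq_of_not_dvd h]
      push_cast
      ring

theorem uq_natCast_zmod_digits {q d : ℕ} (hq : 2 ≤ q) (hdq : d ∣ q) (m : ℕ) {c₁ c₀ : ℕ}
    (h₁ : c₁ < q) (h₀ : c₀ < q) :
    (uq q (q * q * m + (q * c₁ + c₀)) : ZMod d) = (c₁ + (m + wq q m)) * (c₀ + 1) := by
  have hq0 : (q : ZMod d) = 0 := (ZMod.natCast_eq_zero_iff _ _).2 hdq
  rw [show q * q * m + (q * c₁ + c₀) = q * (q * m + c₁) + c₀ by ring, uq_natCast_zmod hdq,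
    wq_self_mul_add _ h₀, wq_self_mul hq, wq_self_mul_add _ h₁, wq_self_mul hq]
  push_cast
  rw [hq0]
  ring

namespace ZMod

variable {n : ℕ} [NeZero n]

theorem sum_val_eq_sum_range {M : Type*} [AddCommMonoid M] (f : ℕ → M) :
    ∑ a : ZMod n, f a.val = ∑ k ∈ range n, f k :=
  sum_nbij' val Nat.cast (by simp [val_lt]) (by simp)
    (fun a _ => natCast_zmod_val a) (fun k hk => val_cast_of_lt (mem_range.1 hk))
    (fun _ _ => rfl)

theorem sum_range_natCast {M : Type*} [AddCommMonoid M] {q : ℕ} (hnq : n ∣ q)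
    (f : ZMod n → M) :
    ∑ k ∈ range q, f k = (q / n) • ∑ a, f a := by
  obtain ⟨c, rfl⟩ := hnq
  rw [Nat.mul_div_cancel_left c (Nat.pos_of_neZero n)]
  induction c with
  | zero => simp
  | succ c ih =>
    have hself : ∑ k ∈ range n, f k = ∑ a, f a := by
      simpa using (sum_val_eq_sum_range (n := n) (fun k => f k)).symm
    simp [mul_add_one, sum_range_add, ih, hself, succ_nsmul]

theorem card_mul_eq_zero (a : ZMod n) : #{b | a * b = 0} = n.gcd a.val := by
  have hker := IsAddCyclic.card_nsmulAddMonoidHom_ker (ZMod n) a.val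
  rw [Nat.card_zmod, Nat.card_eq_fintype_card, Fintype.card_subtype] at hker
  rw [← hker]
  congr 1
  ext b
  simp [nsmul_eq_mul]

theorem neg_intCast_mem_range_mul_iff (a : ZMod n) (x : ℤ) :
    -(x : ZMod n) ∈ Set.range (a * ·) ↔ (n.gcd a.val : ℤ) ∣ x := by
  constructor
  · rintro ⟨b, hb⟩
    have hdvd : (n : ℤ) ∣ a.val * b.val + x := by
      rw [← intCast_zmod_eq_zero_iff_dvd]
      push_cast
      simp [hb]
    have hg : (n.gcd a.val : ℤ) ∣ a.val * b.val :=
      (Int.natCast_dvd_natCast.2 (Nat.gcd_dvd_right n a.val)).mul_right _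
    exact (dvd_add_right hg).1 ((Int.natCast_dvd_natCast.2 (Nat.gcd_dvd_left n a.val)).trans hdvd)
  · rintro ⟨k, rfl⟩
    refine ⟨-(Nat.gcdB n a.val * k), ?_⟩
    dsimp only
    rw [Nat.gcd_eq_gcd_ab]
    push_cast
    rw [natCast_self, natCast_zmod_val]
    ring

theorem card_mul_add_intCast_eq_zero (a : ZMod n) (x : ℤ) :
    #{b | a * b + x = 0} = if (n.gcd a.val : ℤ) ∣ x then n.gcd a.val else 0 := by
  simp_rw [add_eq_zero_iff_eq_neg]
  split_ifs with hx
  · rw [← card_mul_eq_zero a]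
    exact AddMonoidHom.card_fiber_eq_of_mem_range (AddMonoidHom.mulLeft a)
      ((neg_intCast_mem_range_mul_iff a x).2 hx) ⟨0, mul_zero a⟩
  · rw [card_eq_zero, filter_eq_empty_iff]
    exact fun b _ hb => hx ((neg_intCast_mem_range_mul_iff a x).1 ⟨b, hb⟩)

theorem card_pairs_mul_add_intCast_eq_zero (x : ℤ) :
    #{p : ZMod n × ZMod n | p.1 * p.2 + x = 0} =
      ∑ f ∈ (Int.gcd x n).divisors, f * Nat.totient (n / f) := by
  have hgcd : ∀ k ∈ range n, n.gcd k ∈ n.divisors := fun k _ =>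
    Nat.mem_divisors.2 ⟨Nat.gcd_dvd_left n k, NeZero.ne n⟩
  calc #{p : ZMod n × ZMod n | p.1 * p.2 + x = 0}
      = ∑ a : ZMod n, #{b | a * b + x = 0} := by
        simp only [card_filter, Fintype.sum_prod_type]
    _ = ∑ k ∈ range n, if (n.gcd k : ℤ) ∣ x then n.gcd k else 0 := by
        simp only [card_mul_add_intCast_eq_zero]
        exact sum_val_eq_sum_range fun k => if (n.gcd k : ℤ) ∣ x then n.gcd k else 0
    _ = ∑ f ∈ n.divisors, Nat.totient (n / f) * if (f : ℤ) ∣ x then f else 0 := by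
        rw [← sum_fiberwise_of_maps_to hgcd]
        refine sum_congr rfl fun f hf => ?_
        rw [sum_congr rfl fun k hk => by rw [(mem_filter.1 hk).2], sum_const, smul_eq_mul,
          Nat.totient_div_of_dvd (Nat.dvd_of_mem_divisors hf)]
    _ = ∑ f ∈ n.divisors with ((f : ℕ) : ℤ) ∣ x, f * Nat.totient (n / f) := by
        rw [sum_filter]
        exact sum_congr rfl fun f _ => by split_ifs <;> ring
    _ = ∑ f ∈ (Int.gcd x n).divisors, f * Nat.totient (n / f) := by
        congr 1
        ext f
        simp [Nat.mem_divisors, Int.gcd, Nat.dvd_gcd_iff, Int.natCast_dvd, NeZero.ne n, and_comm]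

end ZMod

theorem Nat.count_mul_eq_sum (p : ℕ → Prop) [DecidablePred p] (B M : ℕ) :
    Nat.count p (B * M) = ∑ m ∈ range M, Nat.count (fun t => p (B * m + t)) B := by
  induction M with
  | zero => simp
  | succ M ih => rw [Nat.mul_succ, Nat.count_add, ih, sum_range_succ]

theorem Nat.tendsto_count_div_of_count_block {p : ℕ → Prop} [DecidablePred p] {A B : ℕ}
    (hB : 0 < B) (h : ∀ m, Nat.count (fun t => p (B * m + t)) B = A) :
    Tendsto (fun N => (Nat.count p N : ℝ) / N) atTop (𝓝 (A / B)) := by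
  have hblocks : ∀ M, Nat.count p (B * M) = M * A := fun M => by
    simp [Nat.count_mul_eq_sum, h]
  have hdev : ∀ N, |(Nat.count p N : ℝ) - N * (A / B)| ≤ A := by
    intro N
    have hlo : B * (N / B) ≤ N := Nat.mul_div_le N B
    have hhi : N ≤ B * (N / B + 1) := (Nat.lt_mul_div_succ N hB).le
    have hcount_lo : ((N / B : ℕ) * A : ℝ) ≤ Nat.count p N := by
      exact_mod_cast hblocks (N / B) ▸ Nat.count_monotone p hlo
    have hcount_hi : (Nat.count p N : ℝ) ≤ ((N / B : ℕ) + 1) * A := by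
      exact_mod_cast hblocks (N / B + 1) ▸ Nat.count_monotone p hhi
    have hBR : (0 : ℝ) < B := by exact_mod_cast hB
    have hquot_lo : ((N / B : ℕ) : ℝ) ≤ N / B := Nat.cast_div_le
    have hquot_hi : (N : ℝ) / B ≤ (N / B : ℕ) + 1 := by
      rw [div_le_iff₀ hBR]
      exact_mod_cast hhi.trans_eq (mul_comm _ _)
    have hA : (0 : ℝ) ≤ A := Nat.cast_nonneg A
    rw [show (N : ℝ) * (A / B) = N / B * A by ring, abs_le]
    constructor <;> nlinarith
  rw [tendsto_iff_norm_sub_tendsto_zero]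
  refine squeeze_zero' (Eventually.of_forall fun N => norm_nonneg _) ?_
    (tendsto_const_div_atTop_nhds_zero_nat (A : ℝ))
  filter_upwards [eventually_gt_atTop 0] with N hN
  have hNR : (0 : ℝ) < N := by exact_mod_cast hN
  rw [Real.norm_eq_abs, show (Nat.count p N : ℝ) / N - A / B = (Nat.count p N - N * (A / B)) / N by
    field_simp, abs_div, abs_of_pos hNR]
  exact div_le_div_of_nonneg_right (hdev N) hNR.le

theorem count_uq_add_emod_eq_zero_block {q d : ℕ} [NeZero d] (hq : 2 ≤ q) (hdq : d ∣ q) (x : ℤ)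
    (m : ℕ) :
    Nat.count (fun t => ((uq q (q * q * m + t) : ℤ) + x) % d = 0) (q * q) =
      q / d * (q / d) * #{p : ZMod d × ZMod d | p.1 * p.2 + x = 0} := by
  set s : ZMod d := m + wq q m
  have hcond : ∀ {c₁ c₀ : ℕ}, c₁ < q → c₀ < q →
      ((((uq q (q * q * m + (q * c₁ + c₀)) : ℤ) + x) % d = 0) ↔
        ((c₁ : ZMod d) + s) * (c₀ + 1) + x = 0) := by
    intro c₁ c₀ h₁ h₀
    rw [← Int.dvd_iff_emod_eq_zero, ← ZMod.intCast_zmod_eq_zero_iff_dvd]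
    push_cast
    rw [uq_natCast_zmod_digits hq hdq m h₁ h₀]
  calc Nat.count (fun t => ((uq q (q * q * m + t) : ℤ) + x) % d = 0) (q * q)
      = ∑ c₁ ∈ range q, ∑ c₀ ∈ range q,
          if ((c₁ : ZMod d) + s) * (c₀ + 1) + x = 0 then 1 else 0 := by
        rw [Nat.count_mul_eq_sum]
        refine sum_congr rfl fun c₁ h₁ => ?_
        rw [Nat.count_eq_card_filter_range, card_filter]
        exact sum_congr rfl fun c₀ h₀ => if_congr (hcond (mem_range.1 h₁) (mem_range.1 h₀)) rfl rfl
    _ = ∑ c₁ ∈ range q, (q / d) • ∑ a : ZMod d,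
          if ((c₁ : ZMod d) + s) * (a + 1) + x = 0 then 1 else 0 :=
        sum_congr rfl fun c₁ _ => ZMod.sum_range_natCast hdq fun a : ZMod d =>
          if ((c₁ : ZMod d) + s) * (a + 1) + x = 0 then 1 else 0
    _ = (q / d) • ∑ b : ZMod d, (q / d) • ∑ a : ZMod d,
          if (b + s) * (a + 1) + x = 0 then 1 else 0 :=
        ZMod.sum_range_natCast hdq (fun b => (q / d) • ∑ a : ZMod d,
          if (b + s) * (a + 1) + x = 0 then 1 else 0)
    _ = q / d * (q / d) * #{p : ZMod d × ZMod d | p.1 * p.2 + x = 0} := by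
        rw [← smul_sum, smul_smul, smul_eq_mul, card_filter, Fintype.sum_prod_type]
        congr 1
        exact Fintype.sum_equiv (Equiv.addRight s) _ _ fun b =>
          Fintype.sum_equiv (Equiv.addRight 1) _ _ fun _ => rfl

theorem stmt_14_general (q d : ℕ) (hq : 2 ≤ q) (hdq : d ∣ q) (x : ℤ) :
    Tendsto
      (fun N : ℕ =>
        (((Finset.range N).filter fun n =>
            ((uq q n : ℤ) + x) % (d : ℤ) = 0).card : ℝ) / N)
      atTop
      (nhds ((1 / (d : ℝ) ^ 2) *
        ∑ f ∈ (Int.gcd x (d : ℤ)).divisors, (f : ℝ) * Nat.totient (d / f))) := by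
  have : NeZero d := ⟨by rintro rfl; rw [zero_dvd_iff] at hdq; omega⟩
  have hlim := Nat.tendsto_count_div_of_count_block
    (p := fun n => ((uq q n : ℤ) + x) % d = 0) (B := q * q) (by positivity)
    (count_uq_add_emod_eq_zero_block hq hdq x)
  simp only [Nat.count_eq_card_filter_range] at hlim
  convert hlim using 2
  rw [ZMod.card_pairs_mul_add_intCast_eq_zero]
  push_cast [Nat.cast_div hdq (Nat.cast_ne_zero.2 (NeZero.ne d))]
  field_simp

theorem stmt_14 (q d : ℕ) (hq : 2 ≤ q) (hd : 2 ≤ d) (hdq : d ∣ q) (x : ℤ) :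
    Tendsto
      (fun N : ℕ =>
        (((Finset.range N).filter fun n =>
            ((uq q n : ℤ) + x) % (d : ℤ) = 0).card : ℝ) / N)
      atTop
      (nhds ((1 / (d : ℝ) ^ 2) *
        ∑ f ∈ (Int.gcd x (d : ℤ)).divisors, (f : ℝ) * Nat.totient (d / f))) :=
  stmt_14_general q d hq hdq x
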